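/- Let σ : A* → A* be a primitive substitution prolongable on a letter a with fixed point x = σ^∞(a), and let u be a non-empty prefix of x. Then there exists a unique substitution σ_u on the return word alphabet R_{x,u} satisfying Θ_{x,u} ∘ σ_u = σ ∘ Θ_{x,u}; moreover σ_u is prolongable on the letter 1 and its unique fixed point is the derived sequence D_u(x). -/

import Mathlib

/-- The factor of the sequence `x` starting at position `i` of length `n`. -/
def seqWord {A : Type*} (x : ℕ → A) (i n : ℕ) : List A :=
  (List.range n).map (fun k => x (i + k))

/-- The word `u` occurs in the sequence `x` at position `i`. -/
def occursAt {A : Type*} (x : ℕ → A) (u : List A) (i : ℕ) : Prop :=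
  seqWord x i u.length = u

/-- `u` is a factor of the sequence `x`. -/
def IsFactor {A : Type*} (x : ℕ → A) (u : List A) : Prop :=
  ∃ i, occursAt x u i

/-- `u` is a prefix of the sequence `x`. -/
def IsPrefixSeq {A : Type*} (u : List A) (x : ℕ → A) : Prop :=
  occursAt x u 0

/-- `x` is uniformly recurrent: every factor occurs in every sufficiently long window. -/
def UnifRec {A : Type*} (x : ℕ → A) : Prop :=
  ∀ u : List A, IsFactor x u → ∃ C, ∀ i, ∃ j, i ≤ j ∧ j < i + C ∧ occursAt x u j

/-- `w` is a return word to `u` in `x`: the factor between two consecutive occurrences of `u`. -/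
def IsReturnWord {A : Type*} (x : ℕ → A) (u w : List A) : Prop :=
  ∃ i j, i < j ∧ occursAt x u i ∧ occursAt x u j ∧
    (∀ k, i < k → k < j → ¬ occursAt x u k) ∧ w = seqWord x i (j - i)

/-- Apply a morphism (given on letters) to a word, by concatenation. -/
def morphApply {I A : Type*} (θ : I → List A) (l : List I) : List A :=
  (l.map θ).flatten

/-- Iterate an endomorphism `σ` of the free monoid `n` times on a word. -/
def morphIter {A : Type*} (σ : A → List A) : ℕ → List A → List A
  | 0, l => l
  | n + 1, l => morphApply σ (morphIter σ n l)

/-- `x` is ultimately periodic. -/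
def UltPeriodic {A : Type*} (x : ℕ → A) : Prop :=
  ∃ p > 0, ∃ N, ∀ n ≥ N, x (n + p) = x n

/-- `x` is linearly recurrent with constant `K`: it is uniformly recurrent and two
successive occurrences of any nonempty factor `u` differ by at most `K * |u|`. -/
def LinRec {A : Type*} (K : ℕ) (x : ℕ → A) : Prop :=
  UnifRec x ∧ ∀ u : List A, u ≠ [] → IsFactor x u →
    ∀ i, occursAt x u i → ∃ j, i < j ∧ j ≤ i + K * u.length ∧ occursAt x u j

/-- `σ` is prolongable on the letter `a`. -/
def Prolongable {A : Type*} (σ : A → List A) (a : A) : Prop :=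
  (∃ t, σ a = a :: t ∧ t ≠ []) ∧
    Filter.Tendsto (fun n => (morphIter σ n [a]).length) Filter.atTop Filter.atTop

/-- `σ` is growing: the image of each letter has length tending to infinity. -/
def Growing {A : Type*} (σ : A → List A) : Prop :=
  ∀ a, Filter.Tendsto (fun n => (morphIter σ n [a]).length) Filter.atTop Filter.atTop

/-- `σ` is primitive: some power sends every letter to a word containing every letter. -/
def Primitive {A : Type*} (σ : A → List A) : Prop :=
  ∃ n > 0, ∀ a b : A, b ∈ morphIter σ n [a]

/-- `x` is the fixed point `σ^∞(a)` of `σ`, prolongable on `a`. -/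
def IsFixedPointOf {A : Type*} (σ : A → List A) (a : A) (x : ℕ → A) : Prop :=
  x 0 = a ∧ ∀ n, IsPrefixSeq (morphIter σ n [a]) x

/-- The word `w` belongs to the language of the endomorphism `σ`. -/
def InLang {A : Type*} (σ : A → List A) (w : List A) : Prop :=
  ∃ a n, w <:+: morphIter σ n [a]

/-- The word `u` occurs at position `i` in the word `w`. -/
def listOccursAt {A : Type*} (w u : List A) (i : ℕ) : Prop :=
  i + u.length ≤ w.length ∧ (w.drop i).take u.length = u

/-- `|σ^k|`: the maximal length of the image of a letter under `σ^k`. -/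
def maxLen {A : Type*} [Fintype A] [Nonempty A] (σ : A → List A) (k : ℕ) : ℕ :=
  Finset.univ.sup' Finset.univ_nonempty (fun a => (morphIter σ k [a]).length)

/-- `⟨σ^k⟩`: the minimal length of the image of a letter under `σ^k`. -/
def minLen {A : Type*} [Fintype A] [Nonempty A] (σ : A → List A) (k : ℕ) : ℕ :=
  Finset.univ.inf' Finset.univ_nonempty (fun a => (morphIter σ k [a]).length)

/-- `(R, θ, z)` is the derived-sequence data of `x` on the prefix `u`: `θ 0, …, θ (R-1)`
enumerate the return words to `u` in order of first appearance in `x`, `z` is the derived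
sequence, i.e. the coding of the decomposition of `x` into return words to `u`,
so that `Θ_{x,u}(z) = x`. -/
def IsDerivedSeq {A : Type*} (x : ℕ → A) (u : List A) (R : ℕ)
    (θ : ℕ → List A) (z : ℕ → ℕ) : Prop :=
  (∀ i < R, IsReturnWord x u (θ i)) ∧
  (∀ w, IsReturnWord x u w → ∃ i < R, θ i = w) ∧
  (∀ i < R, ∀ j < R, i < j →
      sInf {k | occursAt x (θ i) k} < sInf {k | occursAt x (θ j) k}) ∧
  (∀ k, z k < R) ∧
  (∀ n, IsPrefixSeq (morphApply θ (seqWord z 0 n)) x)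


/-!
The occurrences of the prefix `u` cut `x` into return words, `x = θ(z)`; write `cut n` for the
position where the block `θ (z n)` starts. These cut points are exactly the occurrences of `u`,
because the first occurrence of `u` after a cut point is the next one. Consequently a
concatenation of return words starting at a cut point and followed by an occurrence of `u` is
uniquely decoded: it is a factor of `z`. Since `σ(u)` begins with `u`, the substitution `σ`
maps occurrences of `u` to occurrences of `u`, hence cut points to cut points,
`σ(x[cut m, cut n)) = x[cut (F m), cut (F n))`. So `σ(θ (z m)) = θ(z[F m, F (m + 1)))` defines
`σ_u`, uniquely by unique decoding, and `σ_u^n(0) = z[0, F^n 1)` with `F m > m` for `m ≥ 1`.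
-/

section

variable {A I : Type*}

section Words

variable {x : ℕ → A} {u v w : List A}

@[simp] theorem seqWord_length (x : ℕ → A) (i n : ℕ) : (seqWord x i n).length = n := by
  simp [seqWord]

@[simp] theorem seqWord_zero (x : ℕ → A) (i : ℕ) : seqWord x i 0 = [] := rfl

theorem seqWord_append (x : ℕ → A) (i m n : ℕ) :
    seqWord x i (m + n) = seqWord x i m ++ seqWord x (i + m) n := by
  simp [seqWord, List.range_add, Function.comp_def, add_assoc]

theorem seqWord_succ (x : ℕ → A) (i n : ℕ) :
    seqWord x i (n + 1) = x i :: seqWord x (i + 1) n := by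
  simp [seqWord, List.range_succ_eq_map, Function.comp_def, add_comm, add_left_comm]

theorem seqWord_take (x : ℕ → A) {i m n : ℕ} (h : m ≤ n) :
    (seqWord x i n).take m = seqWord x i m := by
  rw [seqWord, seqWord, ← List.map_take, List.take_range, min_eq_left h]

theorem seqWord_add_eq_take_drop (x : ℕ → A) {p s n L : ℕ} (h : s + n ≤ L) :
    seqWord x (p + s) n = ((seqWord x p L).drop s).take n := by
  apply List.ext_getElem
  · simp only [seqWord_length, List.length_take, List.length_drop, left_eq_inf]
    omega
  · intro k _ _
    simp [seqWord, add_assoc]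

theorem mem_seqWord {z : ℕ → I} {i n : ℕ} {j : I} :
    j ∈ seqWord z i n ↔ ∃ k < n, z (i + k) = j := by
  simp [seqWord]

theorem occursAt_iff_prefix {p n : ℕ} (h : u.length ≤ n) :
    occursAt x u p ↔ u <+: seqWord x p n := by
  rw [List.prefix_iff_eq_take, seqWord_take x h, occursAt, eq_comm]

theorem occursAt_of_prefix {p n : ℕ} (h : u <+: seqWord x p n) : occursAt x u p :=
  (occursAt_iff_prefix (by simpa using h.length_le)).2 h

theorem isPrefixSeq_seqWord (x : ℕ → A) (n : ℕ) : IsPrefixSeq (seqWord x 0 n) x := by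
  rw [IsPrefixSeq, occursAt, seqWord_length]

theorem IsPrefixSeq.of_prefix (hv : IsPrefixSeq v x) (h : w <+: v) : IsPrefixSeq w x :=
  occursAt_of_prefix (n := v.length) (hv.symm ▸ h)

theorem IsPrefixSeq.prefix (hv : IsPrefixSeq v x) (hw : IsPrefixSeq w x)
    (h : v.length ≤ w.length) : v <+: w :=
  (occursAt_iff_prefix h).1 hv |>.trans (by rw [hw])

theorem IsPrefixSeq.seqWord_eq (h : IsPrefixSeq (v ++ w) x) : seqWord x v.length w.length = w := by
  rw [IsPrefixSeq, occursAt, List.length_append, seqWord_append, zero_add] at h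
  exact (List.append_inj h (by simp)).2

theorem occursAt_add_iff_of_seqWord_eq {y : ℕ → A} {p q s L : ℕ}
    (h : seqWord x p L = seqWord y q L) (hs : s + u.length ≤ L) :
    occursAt x u (p + s) ↔ occursAt y u (q + s) := by
  rw [occursAt, occursAt, seqWord_add_eq_take_drop x hs, seqWord_add_eq_take_drop y hs, h]

end Words

section Morphisms

variable {θ : I → List A} {u : List A} {l : List I}

@[simp] theorem morphApply_nil (θ : I → List A) : morphApply θ [] = [] := rfl

@[simp] theorem morphApply_cons (θ : I → List A) (j : I) (l : List I) :
    morphApply θ (j :: l) = θ j ++ morphApply θ l := by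
  simp [morphApply]

@[simp] theorem morphApply_append (θ : I → List A) (l₁ l₂ : List I) :
    morphApply θ (l₁ ++ l₂) = morphApply θ l₁ ++ morphApply θ l₂ := by
  simp [morphApply]

theorem morphApply_singleton (θ : I → List A) (j : I) : morphApply θ [j] = θ j := by
  simp

theorem length_le_length_morphApply (h : ∀ j ∈ l, θ j ≠ []) :
    l.length ≤ (morphApply θ l).length := by
  induction l with
  | nil => simp
  | cons j l ih =>
    have := List.length_pos_iff.2 (h j List.mem_cons_self)
    simp only [List.length_cons, morphApply_cons, List.length_append]
    have := ih fun k hk => h k (List.mem_cons_of_mem j hk)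
    omega

theorem prefix_morphApply_append (h : ∀ j ∈ l, u <+: θ j ++ u) :
    u <+: morphApply θ l ++ u := by
  induction l with
  | nil => simp
  | cons j l ih =>
    rw [morphApply_cons, List.append_assoc]
    exact (h j List.mem_cons_self).trans
      ((List.prefix_append_right_inj _).2 (ih fun k hk => h k (List.mem_cons_of_mem j hk)))

end Morphisms

/-- `x = θ(z)`. -/
def IsMorphImage (θ : I → List A) (z : ℕ → I) (x : ℕ → A) : Prop :=
  ∀ n, IsPrefixSeq (morphApply θ (seqWord z 0 n)) x

/-- The position in `θ(z)` at which the block `θ (z n)` starts. -/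
def cut (θ : I → List A) (z : ℕ → I) (n : ℕ) : ℕ :=
  (morphApply θ (seqWord z 0 n)).length

section Cut

variable {θ : I → List A} {z : ℕ → I} {x : ℕ → A}

@[simp] theorem cut_zero : cut θ z 0 = 0 := rfl

theorem cut_add (m k : ℕ) :
    cut θ z (m + k) = cut θ z m + (morphApply θ (seqWord z m k)).length := by
  simp [cut, seqWord_append]

theorem cut_succ (n : ℕ) : cut θ z (n + 1) = cut θ z n + (θ (z n)).length := by
  simp [cut_add, seqWord_succ]

theorem cut_mono : Monotone (cut θ z) :=
  monotone_nat_of_le_succ fun n => by simp [cut_succ]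

theorem strictMono_cut (h : ∀ n, θ (z n) ≠ []) : StrictMono (cut θ z) :=
  strictMono_nat_of_lt_succ fun n => by simpa [cut_succ, List.length_pos_iff] using h n

theorem add_le_cut_add (h : ∀ n, θ (z n) ≠ []) (m k : ℕ) :
    cut θ z m + k ≤ cut θ z (m + k) := by
  rw [cut_add]
  have := length_le_length_morphApply (θ := θ) (l := seqWord z m k) fun j hj => by
    obtain ⟨i, -, rfl⟩ := mem_seqWord.1 hj
    exact h _
  simpa using this

theorem IsMorphImage.seqWord_cut (hx : IsMorphImage θ z x) (m k : ℕ) :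
    seqWord x (cut θ z m) (morphApply θ (seqWord z m k)).length =
      morphApply θ (seqWord z m k) := by
  have := hx (m + k)
  rw [seqWord_append, zero_add, morphApply_append] at this
  exact this.seqWord_eq

theorem IsMorphImage.seqWord_cut_succ (hx : IsMorphImage θ z x) (n : ℕ) :
    seqWord x (cut θ z n) (θ (z n)).length = θ (z n) := by
  simpa [seqWord_succ] using hx.seqWord_cut n 1

theorem IsMorphImage.seqWord_cut_sub (hx : IsMorphImage θ z x) {m n : ℕ} (h : m ≤ n) :
    seqWord x (cut θ z m) (cut θ z n - cut θ z m) = morphApply θ (seqWord z m (n - m)) := by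
  obtain ⟨k, rfl⟩ := Nat.exists_eq_add_of_le h
  simpa [cut_add] using hx.seqWord_cut m k

end Cut

section ReturnWords

variable {x : ℕ → A} {u w : List A}

theorem IsReturnWord.ne_nil (hw : IsReturnWord x u w) : w ≠ [] := by
  obtain ⟨i, j, hij, -, -, -, rfl⟩ := hw
  rw [← List.length_pos_iff, seqWord_length]
  omega

theorem IsReturnWord.exists_window (hw : IsReturnWord x u w) :
    ∃ i, seqWord x i (w.length + u.length) = w ++ u ∧
      ∀ s ≤ w.length, (occursAt x u (i + s) ↔ s = 0 ∨ s = w.length) := by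
  obtain ⟨i, j, hij, hi, hj, hbetween, rfl⟩ := hw
  have hj' : i + (j - i) = j := by omega
  refine ⟨i, by rw [seqWord_length, seqWord_append, hj', hj],
    fun s hs => ⟨fun hs' => ?_, ?_⟩⟩
  · rw [seqWord_length] at hs ⊢
    by_contra! h
    exact hbetween (i + s) (by omega) (by omega) hs'
  · rintro (rfl | rfl)
    · exact hi
    · rwa [seqWord_length, hj']

theorem IsReturnWord.occursAt_add_iff (hw : IsReturnWord x u w) {p s : ℕ}
    (hp : seqWord x p (w.length + u.length) = w ++ u) (hs : s ≤ w.length) :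
    occursAt x u (p + s) ↔ s = 0 ∨ s = w.length := by
  obtain ⟨i, hi, hocc⟩ := hw.exists_window
  rw [occursAt_add_iff_of_seqWord_eq (hp.trans hi.symm) (by omega)]
  exact hocc s hs

theorem IsReturnWord.prefix_append (hw : IsReturnWord x u w) : u <+: w ++ u := by
  obtain ⟨i, hi, hocc⟩ := hw.exists_window
  have := (hocc 0 (Nat.zero_le _)).2 (Or.inl rfl)
  rw [add_zero, occursAt_iff_prefix (Nat.le_add_left _ _), hi] at this
  exact this

end ReturnWords

namespace IsDerivedSeq

variable {x : ℕ → A} {u : List A} {R : ℕ} {θ : ℕ → List A} {z : ℕ → ℕ}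

theorem lt (hd : IsDerivedSeq x u R θ z) (n : ℕ) : z n < R := hd.2.2.2.1 n

theorem isMorphImage (hd : IsDerivedSeq x u R θ z) : IsMorphImage θ z x := hd.2.2.2.2

theorem isReturnWord (hd : IsDerivedSeq x u R θ z) (n : ℕ) : IsReturnWord x u (θ (z n)) :=
  hd.1 _ (hd.lt n)

theorem injOn (hd : IsDerivedSeq x u R θ z) : Set.InjOn θ (Set.Iio R) := by
  intro i hi j hj h
  by_contra hne
  rcases lt_or_gt_of_ne hne with hij | hji
  · exact (hd.2.2.1 i hi j hj hij).ne (by rw [h])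
  · exact (hd.2.2.1 j hj i hi hji).ne (by rw [h])

theorem strictMono_cut (hd : IsDerivedSeq x u R θ z) : StrictMono (cut θ z) :=
  _root_.strictMono_cut fun n => (hd.isReturnWord n).ne_nil

/-- `u` is a prefix of every `θ j ++ u`, and `|u|` consecutive blocks are at least as long
as `u`. -/
theorem occursAt_cut (hd : IsDerivedSeq x u R θ z) (n : ℕ) : occursAt x u (cut θ z n) := by
  set l := seqWord z n u.length
  have hl : ∀ j ∈ l, ∃ k, z k = j := fun j hj => by
    obtain ⟨k, -, rfl⟩ := mem_seqWord.1 hj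
    exact ⟨_, rfl⟩
  have hpre : u <+: morphApply θ l ++ u := prefix_morphApply_append fun j hj => by
    obtain ⟨k, rfl⟩ := hl j hj
    exact (hd.isReturnWord k).prefix_append
  have hlen : u.length ≤ (morphApply θ l).length :=
    calc u.length = l.length := by simp [l]
      _ ≤ _ := length_le_length_morphApply fun j hj => by
        obtain ⟨k, rfl⟩ := hl j hj
        exact (hd.isReturnWord k).ne_nil
  have := List.prefix_of_prefix_length_le hpre (List.prefix_append _ _) hlen
  rw [← hd.isMorphImage.seqWord_cut] at this
  exact occursAt_of_prefix this

theorem seqWord_cut_eq_append (hd : IsDerivedSeq x u R θ z) (n : ℕ) :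
    seqWord x (cut θ z n) ((θ (z n)).length + u.length) = θ (z n) ++ u := by
  rw [seqWord_append, hd.isMorphImage.seqWord_cut_succ, ← cut_succ, hd.occursAt_cut (n + 1)]

theorem occursAt_iff (hd : IsDerivedSeq x u R θ z) {p : ℕ} :
    occursAt x u p ↔ ∃ n, cut θ z n = p := by
  refine ⟨fun hp => ?_, fun ⟨n, hn⟩ => hn ▸ hd.occursAt_cut n⟩
  rcases Nat.eq_zero_or_pos p with rfl | hp0
  · exact ⟨0, cut_zero⟩
  obtain ⟨n, hlt, hle⟩ := hd.strictMono_cut.exists_between_of_tendsto_atTop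
    hd.strictMono_cut.tendsto_atTop (by rwa [cut_zero])
  rw [cut_succ] at hle
  obtain ⟨s, rfl⟩ := Nat.exists_eq_add_of_le hlt.le
  rcases ((hd.isReturnWord n).occursAt_add_iff (hd.seqWord_cut_eq_append n) (by omega)).1 hp with
    h | h
  · omega
  · exact ⟨n + 1, by rw [cut_succ, h]⟩

theorem not_occursAt (hd : IsDerivedSeq x u R θ z) {n p : ℕ} (h₁ : cut θ z n < p)
    (h₂ : p < cut θ z (n + 1)) : ¬ occursAt x u p := by
  rw [hd.occursAt_iff]
  rintro ⟨m, rfl⟩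
  exact hd.strictMono_cut.monotone.ne_of_lt_of_lt_nat n h₁ h₂ m rfl

theorem occursAt_of_seqWord_eq (hd : IsDerivedSeq x u R θ z) {l : List ℕ}
    (hl : ∀ j ∈ l, j < R) {p : ℕ} (h : seqWord x p (morphApply θ l).length = morphApply θ l)
    (hocc : occursAt x u (p + (morphApply θ l).length)) : occursAt x u p := by
  induction l generalizing p with
  | nil => simpa using hocc
  | cons j l ih =>
    simp only [morphApply_cons, List.length_append, seqWord_append] at h hocc
    obtain ⟨hj, hl'⟩ := List.append_inj h (by simp)
    have hmid := ih (fun k hk => hl k (List.mem_cons_of_mem j hk)) hl' (by rwa [add_assoc])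
    have hwin : seqWord x p ((θ j).length + u.length) = θ j ++ u := by
      rw [seqWord_append, hj, hmid]
    simpa using ((hd.1 j (hl j List.mem_cons_self)).occursAt_add_iff hwin (Nat.zero_le _)).2
      (Or.inl rfl)

theorem length_eq_of_seqWord_eq (hd : IsDerivedSeq x u R θ z) {w : List A}
    (hw : IsReturnWord x u w) {n : ℕ}
    (h : seqWord x (cut θ z n) (w.length + u.length) = w ++ u) : w.length = (θ (z n)).length := by
  have hw0 := List.length_pos_iff.2 hw.ne_nil
  have hend : occursAt x u (cut θ z n + w.length) := (hw.occursAt_add_iff h le_rfl).2 (Or.inr rfl)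
  have hnext := hd.occursAt_cut (n + 1)
  rw [cut_succ] at hnext
  by_contra hne
  rcases lt_or_gt_of_ne hne with hlt | hgt
  · exact hd.not_occursAt (n := n) (by omega) (by rw [cut_succ]; omega) hend
  · have := (hw.occursAt_add_iff h hgt.le).1 hnext
    have := List.length_pos_iff.2 (hd.isReturnWord n).ne_nil
    omega

/-- Unique decoding into return words at cut points. -/
theorem eq_seqWord_of_morphApply_eq (hd : IsDerivedSeq x u R θ z) {l : List ℕ}
    (hl : ∀ j ∈ l, j < R) {n k : ℕ} (h : morphApply θ l = morphApply θ (seqWord z n k)) :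
    l = seqWord z n k := by
  induction l generalizing n k with
  | nil =>
    cases k with
    | zero => rfl
    | succ k => simp [seqWord_succ, (hd.isReturnWord n).ne_nil] at h
  | cons j l ih =>
    have hjR := hl j List.mem_cons_self
    have hlR : ∀ i ∈ l, i < R := fun i hi => hl i (List.mem_cons_of_mem j hi)
    cases k with
    | zero => simp [(hd.1 j hjR).ne_nil] at h
    | succ k =>
      have hblock := hd.isMorphImage.seqWord_cut n (k + 1)
      have hend := hd.occursAt_cut (n + (k + 1))
      rw [cut_add, ← h] at hend
      rw [← h] at hblock
      simp only [morphApply_cons, List.length_append, seqWord_append] at hblock hend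
      obtain ⟨hj, hl'⟩ := List.append_inj hblock (by simp)
      have hmid := hd.occursAt_of_seqWord_eq hlR hl' (by rwa [add_assoc])
      have hlen := hd.length_eq_of_seqWord_eq (hd.1 j hjR) (by rw [seqWord_append, hj, hmid])
      rw [seqWord_succ, morphApply_cons] at h
      obtain ⟨hθj, hθl⟩ := List.append_inj h hlen
      rw [seqWord_succ, hd.injOn hjR (hd.lt n) hθj, ih hlR hθl]

theorem z_zero (hd : IsDerivedSeq x u R θ z) : z 0 = 0 := by
  by_contra h
  have hfirst : occursAt x (θ (z 0)) 0 := hd.isMorphImage.seqWord_cut_succ 0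
  have := hd.2.2.1 0 (by have := hd.lt 0; omega) (z 0) (hd.lt 0) (Nat.pos_of_ne_zero h)
  rw [(Nat.sInf_eq_zero (s := {k | occursAt x (θ (z 0)) k})).2 (Or.inl hfirst)] at this
  exact Nat.not_lt_zero _ this

theorem surjOn (hd : IsDerivedSeq x u R θ z) {i : ℕ} (hi : i < R) : ∃ n, z n = i := by
  obtain ⟨p, q, hpq, hp, hq, hbetween, hθi⟩ := hd.1 i hi
  obtain ⟨n, rfl⟩ := hd.occursAt_iff.1 hp
  obtain ⟨m, rfl⟩ := hd.occursAt_iff.1 hq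
  have hnm := hd.strictMono_cut.lt_iff_lt.1 hpq
  obtain rfl : m = n + 1 := by
    by_contra hm
    exact hbetween _ (hd.strictMono_cut (Nat.lt_succ_self n)) (hd.strictMono_cut (by omega))
      (hd.occursAt_cut (n + 1))
  refine ⟨n, hd.injOn (hd.lt n) hi ?_⟩
  rw [hθi, cut_succ, Nat.add_sub_cancel_left, hd.isMorphImage.seqWord_cut_succ]

end IsDerivedSeq

section FixedPoint

variable {σ : A → List A} {a : A} {x : ℕ → A} {u : List A}

theorem Growing.ne_nil (h : Growing σ) (b : A) : σ b ≠ [] := by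
  intro hb
  have hvanish : ∀ n, morphIter σ (n + 1) [b] = [] := by
    intro n
    induction n with
    | zero => simp [morphIter, hb]
    | succ n ih => simp only [morphIter] at ih ⊢; rw [ih, morphApply_nil]
  obtain ⟨N, hN⟩ := Filter.eventually_atTop.1 ((h b).eventually_gt_atTop 0)
  simpa [hvanish N] using hN (N + 1) (Nat.le_succ N)

theorem IsFixedPointOf.isMorphImage (hx : IsFixedPointOf σ a x)
    (htend : Filter.Tendsto (fun n => (morphIter σ n [a]).length) Filter.atTop Filter.atTop) :
    IsMorphImage σ x x := by
  intro p
  obtain ⟨n, hn⟩ := (htend.eventually_ge_atTop p).exists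
  have hpre : seqWord x 0 p <+: morphIter σ n [a] :=
    (isPrefixSeq_seqWord x p).prefix (hx.2 n) (by simpa using hn)
  exact (hx.2 (n + 1)).of_prefix (hpre.map σ).flatten

/-- `σ(u)` begins with `u`, so `σ` sends each occurrence of the prefix `u` to one. -/
theorem IsMorphImage.occursAt_cut (hσ : IsMorphImage σ x x) (hne : ∀ b, σ b ≠ [])
    (hu : IsPrefixSeq u x) {p : ℕ} (hp : occursAt x u p) : occursAt x u (cut σ x p) := by
  have himage : seqWord x (cut σ x p) (morphApply σ u).length = morphApply σ u :=
    (hp : seqWord x p u.length = u) ▸ hσ.seqWord_cut p u.length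
  have hσu : IsPrefixSeq (morphApply σ u) x := (hu : seqWord x 0 u.length = u) ▸ hσ u.length
  have hpre : u <+: morphApply σ u :=
    hu.prefix hσu (length_le_length_morphApply fun b _ => hne b)
  exact occursAt_of_prefix (himage.symm ▸ hpre)

theorem lt_cut (hne : ∀ b, σ b ≠ []) (h : 2 ≤ (σ (x 0)).length) {p : ℕ} (hp : 1 ≤ p) :
    p < cut σ x p := by
  have := add_le_cut_add (fun n => hne (x n)) 1 (p - 1)
  rw [Nat.add_sub_cancel' hp, cut_succ, cut_zero] at this
  omega

end FixedPoint

section ReturnSubstitution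

variable {x : ℕ → A} {u : List A} {R : ℕ} {θ : ℕ → List A} {z : ℕ → ℕ}
  {σ : A → List A}

/-- `σ` sends cut points to cut points, since it sends occurrences of `u` to occurrences of `u`. -/
theorem IsDerivedSeq.exists_index_map (hd : IsDerivedSeq x u R θ z) (hσ : IsMorphImage σ x x)
    (hne : ∀ b, σ b ≠ []) (hu : IsPrefixSeq u x) (h2 : 2 ≤ (σ (x 0)).length) :
    ∃ F : ℕ → ℕ, F 0 = 0 ∧ Monotone F ∧ (∀ m, 1 ≤ m → m < F m) ∧
      ∀ m, morphApply θ (seqWord z (F m) (F (m + 1) - F m)) = morphApply σ (θ (z m)) := by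
  choose F hF using fun m => hd.occursAt_iff.1 (hσ.occursAt_cut hne hu (hd.occursAt_cut m))
  have hmono : Monotone F := fun m n hmn =>
    hd.strictMono_cut.le_iff_le.1 (by rw [hF, hF]; exact cut_mono (cut_mono hmn))
  refine ⟨F, hd.strictMono_cut.injective (by rw [hF]; rfl), hmono, fun m hm => ?_, fun m => ?_⟩
  · rw [← hd.strictMono_cut.lt_iff_lt, hF]
    exact lt_cut hne h2 (hm.trans hd.strictMono_cut.le_apply)
  · rw [← hd.isMorphImage.seqWord_cut_sub (hmono m.le_succ), hF, hF,
      hσ.seqWord_cut_sub (cut_mono m.le_succ), hd.isMorphImage.seqWord_cut_sub m.le_succ]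
    simp [seqWord_succ]

/-- By unique decoding, this does not depend on the choice of `n` with `z n = i`. -/
noncomputable def returnSubst (z F : ℕ → ℕ) (i : ℕ) : List ℕ :=
  seqWord z (F (Function.invFun z i)) (F (Function.invFun z i + 1) - F (Function.invFun z i))

variable {F : ℕ → ℕ}

theorem IsDerivedSeq.returnSubst_lt (hd : IsDerivedSeq x u R θ z) (i : ℕ) :
    ∀ j ∈ returnSubst z F i, j < R := fun j hj => by
  obtain ⟨k, -, rfl⟩ := mem_seqWord.1 hj
  exact hd.lt _

theorem IsDerivedSeq.returnSubst_apply (hd : IsDerivedSeq x u R θ z)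
    (hFθ : ∀ m, morphApply θ (seqWord z (F m) (F (m + 1) - F m)) = morphApply σ (θ (z m)))
    (n : ℕ) : returnSubst z F (z n) = seqWord z (F n) (F (n + 1) - F n) :=
  hd.eq_seqWord_of_morphApply_eq (hd.returnSubst_lt _)
    (by rw [returnSubst, hFθ, Function.invFun_eq (f := z) ⟨n, rfl⟩, hFθ])

theorem IsDerivedSeq.morphApply_returnSubst (hd : IsDerivedSeq x u R θ z)
    (hFθ : ∀ m, morphApply θ (seqWord z (F m) (F (m + 1) - F m)) = morphApply σ (θ (z m)))
    {i : ℕ} (hi : i < R) : morphApply θ (returnSubst z F i) = morphApply σ (θ i) := by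
  obtain ⟨n, rfl⟩ := hd.surjOn hi
  rw [hd.returnSubst_apply hFθ, hFθ]

theorem IsDerivedSeq.eq_returnSubst (hd : IsDerivedSeq x u R θ z)
    (hFθ : ∀ m, morphApply θ (seqWord z (F m) (F (m + 1) - F m)) = morphApply σ (θ (z m)))
    {l : List ℕ} (hl : ∀ j ∈ l, j < R) {i : ℕ} (hi : i < R)
    (h : morphApply θ l = morphApply σ (θ i)) :
    l = returnSubst z F i := by
  obtain ⟨n, rfl⟩ := hd.surjOn hi
  rw [hd.returnSubst_apply hFθ]
  exact hd.eq_seqWord_of_morphApply_eq hl (h.trans (hFθ n).symm)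

theorem IsDerivedSeq.morphApply_returnSubst_seqWord (hd : IsDerivedSeq x u R θ z)
    (hFθ : ∀ m, morphApply θ (seqWord z (F m) (F (m + 1) - F m)) = morphApply σ (θ (z m)))
    (hF0 : F 0 = 0) (hmono : Monotone F) (m : ℕ) :
    morphApply (returnSubst z F) (seqWord z 0 m) = seqWord z 0 (F m) := by
  induction m with
  | zero => simp [hF0]
  | succ m ih =>
    rw [seqWord_append, zero_add, morphApply_append, ih, seqWord_succ, seqWord_zero,
      morphApply_singleton, hd.returnSubst_apply hFθ]
    simpa [Nat.add_sub_cancel' (hmono m.le_succ)] using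
      (seqWord_append z 0 (F m) (F (m + 1) - F m)).symm

theorem IsDerivedSeq.morphIter_returnSubst (hd : IsDerivedSeq x u R θ z)
    (hFθ : ∀ m, morphApply θ (seqWord z (F m) (F (m + 1) - F m)) = morphApply σ (θ (z m)))
    (hF0 : F 0 = 0) (hmono : Monotone F) (n : ℕ) :
    morphIter (returnSubst z F) n [0] = seqWord z 0 (F^[n] 1) := by
  induction n with
  | zero => simp [morphIter, seqWord_succ, hd.z_zero]
  | succ n ih =>
    rw [morphIter, ih, hd.morphApply_returnSubst_seqWord hFθ hF0 hmono,
      Function.iterate_succ_apply']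

end ReturnSubstitution

theorem add_one_le_iterate {F : ℕ → ℕ} (hF : ∀ m, 1 ≤ m → m < F m) (n : ℕ) :
    n + 1 ≤ F^[n] 1 := by
  induction n with
  | zero => simp
  | succ n ih =>
    rw [Function.iterate_succ_apply']
    have := hF _ (by omega : 1 ≤ F^[n] 1)
    omega

end

theorem return_substitution_general {A : Type*} (σ : A → List A) (a : A)
    (hgrow : Growing σ) (hprol : Prolongable σ a)
    (x : ℕ → A) (hx : IsFixedPointOf σ a x)
    (u : List A) (hup : IsPrefixSeq u x)
    (R : ℕ) (θ : ℕ → List A) (z : ℕ → ℕ) (hd : IsDerivedSeq x u R θ z) :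
    ∃ σu : ℕ → List ℕ,
      (∀ i < R, ∀ j ∈ σu i, j < R) ∧
      (∀ i < R, morphApply θ (σu i) = morphApply σ (θ i)) ∧
      (∀ σu' : ℕ → List ℕ, (∀ i < R, ∀ j ∈ σu' i, j < R) →
        (∀ i < R, morphApply θ (σu' i) = morphApply σ (θ i)) →
        ∀ i < R, σu' i = σu i) ∧
      (∃ t, σu 0 = 0 :: t ∧ t ≠ []) ∧
      Filter.Tendsto (fun n => (morphIter σu n [0]).length) Filter.atTop Filter.atTop ∧
      (∀ n, IsPrefixSeq (morphIter σu n [0]) z) := by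
  obtain ⟨⟨t, hσa, ht⟩, htend⟩ := hprol
  have h2 : 2 ≤ (σ (x 0)).length := by
    rw [hx.1, hσa, List.length_cons]
    exact Nat.succ_le_succ (List.length_pos_iff.2 ht)
  obtain ⟨F, hF0, hmono, hgt, hFθ⟩ :=
    hd.exists_index_map (hx.isMorphImage htend) hgrow.ne_nil hup h2
  have hiter := hd.morphIter_returnSubst hFθ hF0 hmono
  refine ⟨returnSubst z F, fun i _ => hd.returnSubst_lt i,
    fun i hi => hd.morphApply_returnSubst hFθ hi,
    fun σu' hlt hconj i hi => hd.eq_returnSubst hFθ (hlt i hi) hi (hconj i hi),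
    ⟨seqWord z 1 (F 1 - 1), ?_, ?_⟩, ?_, fun n => hiter n ▸ isPrefixSeq_seqWord z _⟩
  · have h01 : returnSubst z F 0 = seqWord z 0 (F 1) := by simpa [morphIter] using hiter 1
    rw [h01, ← Nat.sub_add_cancel (hgt 1 le_rfl).le, seqWord_succ, hd.z_zero, Nat.add_sub_cancel]
  · rw [← List.length_pos_iff, seqWord_length]
    have := hgt 1 le_rfl
    omega
  · refine Filter.tendsto_atTop_mono (fun n => ?_) (Filter.tendsto_add_atTop_nat 1)
    rw [hiter, seqWord_length]
    exact add_one_le_iterate hgt n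

/-- Proposition (Durand 1998): let `σ` be a primitive substitution prolongable on `a`
with fixed point `x = σ^∞(a)`, `u` a non-empty prefix of `x`, and `(R, θ, z)` the
derived-sequence data of `x` on `u` (so `z = D_u(x)` and `θ` realizes `Θ_{x,u}`). Then
there is a unique substitution `σu` on the return-word alphabet `{0, …, R-1}` with
`Θ_{x,u} ∘ σu = σ ∘ Θ_{x,u}`; moreover `σu` is prolongable on the first letter `0`
(the letter `1` of the paper) and its unique fixed point is the derived sequence
`z = D_u(x)`. -/
theorem return_substitution {A : Type*} [Fintype A] (σ : A → List A) (a : A)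
    (hprim : Primitive σ) (hgrow : Growing σ) (hprol : Prolongable σ a)
    (x : ℕ → A) (hx : IsFixedPointOf σ a x)
    (u : List A) (hu : u ≠ []) (hup : IsPrefixSeq u x)
    (R : ℕ) (θ : ℕ → List A) (z : ℕ → ℕ) (hd : IsDerivedSeq x u R θ z) :
    ∃ σu : ℕ → List ℕ,
      (∀ i < R, ∀ j ∈ σu i, j < R) ∧
      (∀ i < R, morphApply θ (σu i) = morphApply σ (θ i)) ∧
      (∀ σu' : ℕ → List ℕ, (∀ i < R, ∀ j ∈ σu' i, j < R) →
        (∀ i < R, morphApply θ (σu' i) = morphApply σ (θ i)) →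
        ∀ i < R, σu' i = σu i) ∧
      (∃ t, σu 0 = 0 :: t ∧ t ≠ []) ∧
      Filter.Tendsto (fun n => (morphIter σu n [0]).length) Filter.atTop Filter.atTop ∧
      (∀ n, IsPrefixSeq (morphIter σu n [0]) z) :=
  return_substitution_general σ a hgrow hprol x hx u hup R θ z hd
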